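/- If L and Y are finite, then the set Σ_I = {P ⇒ P^{↓↑} : P is an S-pseudo-intent of ⟨X, Y, I⟩} is S-complete in ⟨X, Y, I⟩, i.e., for all A, B ∈ L^Y: Σ_I ⊨^S A ⇒ B iff I ⊨^S A ⇒ B. -/

import Mathlib

/-- A complete residuated lattice: a complete lattice with a commutative, associative
multiplication whose neutral element is the top element and which distributes over
arbitrary suprema. -/
class CompleteResiduatedLattice (L : Type*) extends CompleteLattice L, CommMonoid L where
  mul_sSup : ∀ (a : L) (s : Set L), a * sSup s = ⨆ b ∈ s, a * b
  one_eq_top : (1 : L) = ⊤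

namespace FAIparam

variable {L : Type*} {Y : Type*} {X : Type*}

/-- A fuzzy attribute implication (FAI): a pair (antecedent, consequent) of L-sets in Y. -/
abbrev FAI (L Y : Type*) := (Y → L) × (Y → L)

/-- A pair of operators on L-sets in Y. -/
abbrev OpPair (L Y : Type*) := ((Y → L) → (Y → L)) × ((Y → L) → (Y → L))

/-- S is a parameterization: every pair in S is a monotone Galois connection, the identity
pair belongs to S, and S is closed under composition ⟨f₁,g₁⟩∘⟨f₂,g₂⟩ = ⟨f₁∘f₂, g₂∘g₁⟩. -/
def IsParam [CompleteResiduatedLattice L] (S : Set (OpPair L Y)) : Prop :=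
  (∀ p ∈ S, ∀ A B : Y → L, p.1 A ≤ B ↔ A ≤ p.2 B) ∧
  (((id, id) : OpPair L Y) ∈ S) ∧
  (∀ p ∈ S, ∀ q ∈ S, ((p.1 ∘ q.1, q.2 ∘ p.2) : OpPair L Y) ∈ S)

/-- M ⊨^S A ⇒ B : for every ⟨f,g⟩ ∈ S, f(A) ⊆ M implies f(B) ⊆ M. -/
def Sat [CompleteResiduatedLattice L] (S : Set (OpPair L Y)) (M : Y → L) (φ : FAI L Y) : Prop :=
  ∀ p ∈ S, p.1 φ.1 ≤ M → p.1 φ.2 ≤ M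

/-- The set Mod^S(Th) of S-models of a theory Th. -/
def ModS [CompleteResiduatedLattice L] (S : Set (OpPair L Y)) (Th : Set (FAI L Y)) :
    Set (Y → L) :=
  {M | ∀ φ ∈ Th, Sat S M φ}

/-- Semantic entailment Th ⊨^S φ, i.e. Mod^S(Th) ⊆ Mod^S({φ}). -/
def Entails [CompleteResiduatedLattice L] (S : Set (OpPair L Y)) (Th : Set (FAI L Y))
    (φ : FAI L Y) : Prop :=
  ModS S Th ⊆ ModS S {φ}

/-- [A]^S_Th : the least S-model of Th containing A (intersection of all such models). -/
def clS [CompleteResiduatedLattice L] (S : Set (OpPair L Y)) (Th : Set (FAI L Y))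
    (A : Y → L) : Y → L :=
  sInf {M | M ∈ ModS S Th ∧ A ≤ M}

/-- S-closure operator on L^Y. -/
def IsSClosureOp [CompleteResiduatedLattice L] (S : Set (OpPair L Y))
    (c : (Y → L) → (Y → L)) : Prop :=
  (∀ A, A ≤ c A) ∧ (∀ A B, A ≤ B → c A ≤ c B) ∧
  (∀ p ∈ S, ∀ A, c (p.2 (c A)) ≤ p.2 (c A))

/-- S-closure system in ⟨L^Y, ⊆⟩. -/
def IsSClosureSys [CompleteResiduatedLattice L] (S : Set (OpPair L Y))
    (𝒮 : Set (Y → L)) : Prop :=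
  (∀ T ⊆ 𝒮, sInf T ∈ 𝒮) ∧ (∀ p ∈ S, ∀ M ∈ 𝒮, p.2 M ∈ 𝒮)

/-- c_𝒮(A) = ⋂{B ∈ 𝒮 : A ⊆ B}. -/
def clSys [CompleteResiduatedLattice L] (𝒮 : Set (Y → L)) (A : Y → L) : Y → L :=
  sInf {B | B ∈ 𝒮 ∧ A ≤ B}

/-- I ⊨^S A ⇒ B for an L-context ⟨X,Y,I⟩ (with I curried, I x = I_x). -/
def CtxSat [CompleteResiduatedLattice L] (S : Set (OpPair L Y)) (I : X → Y → L)
    (φ : FAI L Y) : Prop :=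
  ∀ x, Sat S (I x) φ

/-- S_g : the set of upper adjoints occurring in S. -/
def Sg [CompleteResiduatedLattice L] (S : Set (OpPair L Y)) : Set ((Y → L) → (Y → L)) :=
  {g | ∃ f, (f, g) ∈ S}

/-- F^↑ = ⋂{g(I_x) : ⟨x,g⟩ ∈ F}. -/
def upOp [CompleteResiduatedLattice L] (I : X → Y → L)
    (F : Set (X × ((Y → L) → (Y → L)))) : Y → L :=
  ⨅ xg ∈ F, xg.2 (I xg.1)

/-- G^↓ = {⟨x,g⟩ ∈ X × S_g : G ⊆ g(I_x)}. -/
def downOp [CompleteResiduatedLattice L] (S : Set (OpPair L Y)) (I : X → Y → L)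
    (G : Y → L) : Set (X × ((Y → L) → (Y → L))) :=
  {xg | xg.2 ∈ Sg S ∧ G ≤ xg.2 (I xg.1)}

/-- G^{↓↑} = ⋂{g(I_x) : x ∈ X, ⟨f,g⟩ ∈ S, G ⊆ g(I_x)}. -/
def dnup [CompleteResiduatedLattice L] (S : Set (OpPair L Y)) (I : X → Y → L)
    (G : Y → L) : Y → L :=
  upOp I (downOp S I G)

/-- Σ is S-complete in ⟨X,Y,I⟩. -/
def SComplete [CompleteResiduatedLattice L] (S : Set (OpPair L Y)) (Th : Set (FAI L Y))
    (I : X → Y → L) : Prop :=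
  ∀ A B : Y → L, Entails S Th (A, B) ↔ CtxSat S I (A, B)

/-- Σ is an S-base of ⟨X,Y,I⟩. -/
def SBase [CompleteResiduatedLattice L] (S : Set (OpPair L Y)) (Th : Set (FAI L Y))
    (I : X → Y → L) : Prop :=
  SComplete S Th I ∧ ∀ Th' ⊂ Th, ¬ SComplete S Th' I

/-- S-provability: axioms A∪B ⇒ A, assumptions from Th, rule (Cut) and rule (F). -/
inductive ProvS [CompleteResiduatedLattice L] (S : Set (OpPair L Y)) (Th : Set (FAI L Y)) :
    FAI L Y → Prop
  | ax (A B : Y → L) : ProvS S Th (A ⊔ B, A)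
  | hyp {φ : FAI L Y} (h : φ ∈ Th) : ProvS S Th φ
  | cut {A B C D : Y → L} : ProvS S Th (A, B) → ProvS S Th (B ⊔ C, D) → ProvS S Th (A ⊔ C, D)
  | mul {A B : Y → L} {p : OpPair L Y} (hp : p ∈ S) : ProvS S Th (A, B) → ProvS S Th (p.1 A, p.1 B)

/-- Provability using the axioms and (Cut) as the only inference rule. -/
inductive ProvCut [CompleteResiduatedLattice L] (Th : Set (FAI L Y)) : FAI L Y → Prop
  | ax (A B : Y → L) : ProvCut Th (A ⊔ B, A)
  | hyp {φ : FAI L Y} (h : φ ∈ Th) : ProvCut Th φ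
  | cut {A B C D : Y → L} : ProvCut Th (A, B) → ProvCut Th (B ⊔ C, D) → ProvCut Th (A ⊔ C, D)

/-- Residuum a → b = ⋁{c : a ⊗ c ≤ b}. -/
def resid [CompleteResiduatedLattice L] (a b : L) : L := sSup {c | a * c ≤ b}

/-- Subsethood degree S(A,B) = ⋀_{y∈Y} (A(y) → B(y)). -/
def subDeg [CompleteResiduatedLattice L] (A B : Y → L) : L := ⨅ y, resid (A y) (B y)

/-- c ⊗ B, pointwise. -/
def scMul [CompleteResiduatedLattice L] (c : L) (B : Y → L) : Y → L := fun y => c * B y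

/-- ||A ⇒ B||^S_M = ⋁{c ∈ L : M ⊨^S A ⇒ c ⊗ B}. -/
def truthDeg [CompleteResiduatedLattice L] (S : Set (OpPair L Y)) (M A B : Y → L) : L :=
  sSup {c | Sat S M (A, scMul c B)}

/-- ||A ⇒ B||^S_Th = ⋀_{M ∈ Mod^S(Th)} ||A ⇒ B||^S_M. -/
def entDeg [CompleteResiduatedLattice L] (S : Set (OpPair L Y)) (Th : Set (FAI L Y))
    (A B : Y → L) : L :=
  ⨅ M ∈ ModS S Th, truthDeg S M A B

/-- Immediate consequence operator t^S_Th. -/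
def tOp [CompleteResiduatedLattice L] (S : Set (OpPair L Y)) (Th : Set (FAI L Y))
    (M : Y → L) : Y → L :=
  M ⊔ sSup {N | ∃ φ ∈ Th, ∃ p ∈ S, p.1 φ.1 ≤ M ∧ N = p.1 φ.2}

/-- S-pseudo-intents, defined by well-founded recursion on ⊊ (L^Y is finite). -/
noncomputable def IsPseudoIntent [CompleteResiduatedLattice L] [Finite L] [Finite Y]
    (dn : (Y → L) → (Y → L)) : (Y → L) → Prop :=
  (wellFounded_lt (α := Y → L)).fix
    (fun P rec => P < dn P ∧ ∀ Q, ∀ h : Q < P, rec Q h → dn Q ≤ P)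


/-!
Validity in the context is read off the closure: `I ⊨ A ⇒ B` iff `B ⊆ A^{↓↑}`. Every row `I_x`
therefore models `P ⇒ P^{↓↑}` for each pseudo-intent `P`. Conversely, let `M` model all these
implications. A set `M` with `M ⊊ M^{↓↑}` that contains `Q^{↓↑}` for every pseudo-intent `Q ⊆ M`
is itself a pseudo-intent, and then `M^{↓↑} ⊆ M`, a contradiction; so models are `↓↑`-closed.
Models are also closed under every upper adjoint `g` of `S`, so if `f(A) ⊆ M` then `A ⊆ g(M)` and
`B ⊆ A^{↓↑} ⊆ g(M)^{↓↑} = g(M)`, i.e. `f(B) ⊆ M`.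
-/

section Development

variable [CompleteResiduatedLattice L] {S : Set (OpPair L Y)}

lemma IsParam.gc (hS : IsParam S) {p : OpPair L Y} (hp : p ∈ S) : GaloisConnection p.1 p.2 :=
  hS.1 p hp

lemma le_of_mem_modS (hS : IsParam S) {Th : Set (FAI L Y)} {M A B : Y → L}
    (hM : M ∈ ModS S Th) (hAB : (A, B) ∈ Th) (hA : A ≤ M) : B ≤ M :=
  hM _ hAB (id, id) hS.2.1 hA

lemma IsParam.snd_mem_modS (hS : IsParam S) {Th : Set (FAI L Y)} {M : Y → L}
    (hM : M ∈ ModS S Th) {p : OpPair L Y} (hp : p ∈ S) : p.2 M ∈ ModS S Th := by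
  intro φ hφ q hq hφq
  rw [← (hS.gc hp).le_iff_le] at hφq ⊢
  exact hM φ hφ _ (hS.2.2 p hp q hq) hφq

variable (S) (I : X → Y → L)

lemma le_dnup (A : Y → L) : A ≤ dnup S I A :=
  le_iInf₂ fun _ h => h.2

lemma dnup_mono : Monotone (dnup S I) :=
  fun _ _ hAB => le_iInf₂ fun xg hxg => iInf₂_le xg ⟨hxg.1, hAB.trans hxg.2⟩

lemma dnup_le_of_mem {A : Y → L} {x : X} {p : OpPair L Y} (hp : p ∈ S)
    (hA : A ≤ p.2 (I x)) : dnup S I A ≤ p.2 (I x) :=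
  iInf₂_le (x, p.2) ⟨⟨p.1, hp⟩, hA⟩

variable {S}

lemma ctxSat_iff_le_dnup (hS : IsParam S) (A B : Y → L) :
    CtxSat S I (A, B) ↔ B ≤ dnup S I A := by
  constructor
  · intro h
    refine le_iInf₂ fun ⟨x, g⟩ ⟨⟨f, hfg⟩, hA⟩ => ?_
    rw [← (hS.gc hfg).le_iff_le] at hA ⊢
    exact h x (f, g) hfg hA
  · intro h x p hp hA
    rw [(hS.gc hp).le_iff_le] at hA ⊢
    exact h.trans (dnup_le_of_mem S I hp hA)

lemma sat_of_ctxSat (hS : IsParam S) {M A B : Y → L}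
    (hM : ∀ p ∈ S, dnup S I (p.2 M) ≤ p.2 M) (h : CtxSat S I (A, B)) : Sat S M (A, B) := by
  intro p hp hA
  rw [(hS.gc hp).le_iff_le] at hA ⊢
  exact ((ctxSat_iff_le_dnup I hS A B).1 h).trans ((dnup_mono S I hA).trans (hM p hp))

end Development

section PseudoIntent

variable [CompleteResiduatedLattice L] [Finite L] [Finite Y]

lemma isPseudoIntent_iff (dn : (Y → L) → (Y → L)) (P : Y → L) :
    IsPseudoIntent dn P ↔ P < dn P ∧ ∀ Q, Q < P → IsPseudoIntent dn Q → dn Q ≤ P := by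
  rw [IsPseudoIntent, WellFounded.fix_eq]

lemma le_of_forall_isPseudoIntent {dn : (Y → L) → (Y → L)} (hdn : ∀ A, A ≤ dn A) {M : Y → L}
    (hM : ∀ P, IsPseudoIntent dn P → P ≤ M → dn P ≤ M) : dn M ≤ M := by
  by_contra hM'
  have hMP : IsPseudoIntent dn M :=
    (isPseudoIntent_iff dn M).2
      ⟨(hdn M).lt_of_not_ge hM', fun Q hQM hQ => hM Q hQ hQM.le⟩
  exact hM' (hM M hMP le_rfl)

def pseudoIntentTheory (S : Set (OpPair L Y)) (I : X → Y → L) : Set (FAI L Y) :=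
  {φ | ∃ P : Y → L, IsPseudoIntent (dnup S I) P ∧ φ = (P, dnup S I P)}

variable {S : Set (OpPair L Y)} (I : X → Y → L)

lemma row_mem_modS_pseudoIntentTheory (hS : IsParam S) (x : X) :
    I x ∈ ModS S (pseudoIntentTheory S I) := by
  rintro _ ⟨P, -, rfl⟩
  exact (ctxSat_iff_le_dnup I hS P _).2 le_rfl x

lemma dnup_le_of_mem_modS_pseudoIntentTheory (hS : IsParam S) {M : Y → L}
    (hM : M ∈ ModS S (pseudoIntentTheory S I)) : dnup S I M ≤ M :=
  le_of_forall_isPseudoIntent (le_dnup S I) fun P hP hPM =>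
    le_of_mem_modS hS hM ⟨P, hP, rfl⟩ hPM

end PseudoIntent

theorem pseudoIntents_sComplete_general
    {L Y X : Type*} [CompleteResiduatedLattice L] [Finite L] [Finite Y]
    (S : Set (OpPair L Y)) (hS : IsParam S) (I : X → Y → L) :
    ∀ A B : Y → L,
      Entails S {φ : FAI L Y | ∃ P : Y → L,
          IsPseudoIntent (dnup S I) P ∧ φ = (P, dnup S I P)} (A, B) ↔
        CtxSat S I (A, B) := by
  intro A B
  constructor
  · intro h x
    exact h (row_mem_modS_pseudoIntentTheory I hS x) (A, B) rfl
  · rintro h M hM _ rfl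
    exact sat_of_ctxSat I hS
      (fun p hp => dnup_le_of_mem_modS_pseudoIntentTheory I hS (hS.snd_mem_modS hM hp)) h

/-- for finite L and Y, the set of implications P ⇒ P^{↓↑} over all
S-pseudo-intents P is S-complete in ⟨X,Y,I⟩. -/
theorem pseudoIntents_sComplete
    {L Y X : Type*} [CompleteResiduatedLattice L] [Finite L] [Finite Y]
    [Nonempty Y] [Nonempty X]
    (S : Set (OpPair L Y)) (hS : IsParam S) (I : X → Y → L) :
    ∀ A B : Y → L,
      Entails S {φ : FAI L Y | ∃ P : Y → L,
          IsPseudoIntent (dnup S I) P ∧ φ = (P, dnup S I P)} (A, B) ↔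
        CtxSat S I (A, B) :=
  pseudoIntents_sComplete_general S hS I

end FAIparam
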